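/- Signals propagate at speed at most one: for any configuration c and any sequence of updates w ∈ {H,V}^t, if a cell x is a signal (state ≥ 4) in F(c,w,t) (the configuration after applying the updates w(1),...,w(t) in order), then there exists a cell y with c(y) ≥ 4 whose distance to x satisfies |x₁ - y₁| ≤ |w|_H and |x₂ - y₂| ≤ |w|_V, where |w|_H and |w|_V count the occurrences of H and V in w. -/

import Mathlib

/-! A cell is a signal after an update only if some cell of its update neighbourhood was a signal
before: with no signal in the neighbourhood the cell receives nothing and, being no signal itself,
keeps its state below 4. Tracing a final signal back through the word therefore moves it one step
along the axis of each letter. -/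

inductive Letter | H | V
deriving DecidableEq, BEq

/-- Horizontal neighborhood `N_h(x) = {x, x+(1,0), x-(1,0)}`. -/
def Nh (x : ℤ × ℤ) : Finset (ℤ × ℤ) := {x, x + (1, 0), x - (1, 0)}

/-- Vertical neighborhood `N_v(x) = {x, x+(0,1), x-(0,1)}`. -/
def Nv (x : ℤ × ℤ) : Finset (ℤ × ℤ) := {x, x + (0, 1), x - (0, 1)}

/-- The horizontal update of the fungal automaton. -/
def upH (c : ℤ × ℤ → ℤ) (x : ℤ × ℤ) : ℤ :=
  c x - 2 * (if 4 ≤ c x then 1 else 0) + ∑ y ∈ Nh x, (if 4 ≤ c y then 1 else 0)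

/-- The vertical update of the fungal automaton. -/
def upV (c : ℤ × ℤ → ℤ) (x : ℤ × ℤ) : ℤ :=
  c x - 2 * (if 4 ≤ c x then 1 else 0) + ∑ y ∈ Nv x, (if 4 ≤ c y then 1 else 0)

/-- One update step, prescribed by a letter. -/
def applyL (c : ℤ × ℤ → ℤ) (L : Letter) : ℤ × ℤ → ℤ :=
  match L with
  | .H => upH c
  | .V => upV c

/-- Iterated application of the updates prescribed by a word `w`. -/
def runW (c : ℤ × ℤ → ℤ) (w : List Letter) : ℤ × ℤ → ℤ :=
  w.foldl applyL c

lemma exists_signal_mem_of_four_le_update {c : ℤ × ℤ → ℤ} {s : Finset (ℤ × ℤ)} {x : ℤ × ℤ}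
    (hxs : x ∈ s)
    (h : 4 ≤ c x - 2 * (if 4 ≤ c x then 1 else 0) + ∑ y ∈ s, (if 4 ≤ c y then 1 else 0)) :
    ∃ y ∈ s, 4 ≤ c y := by
  by_contra! hs
  have hsum : ∑ y ∈ s, (if 4 ≤ c y then (1 : ℤ) else 0) = 0 :=
    Finset.sum_eq_zero fun y hy => if_neg (hs y hy).not_ge
  rw [hsum, if_neg (hs x hxs).not_ge] at h
  linarith [hs x hxs]

lemma abs_sub_le_of_mem_Nh {x y : ℤ × ℤ} (h : y ∈ Nh x) : |x.1 - y.1| ≤ 1 ∧ |x.2 - y.2| ≤ 0 := by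
  simp only [Nh, Finset.mem_insert, Finset.mem_singleton] at h
  rcases h with rfl | rfl | rfl <;> simp

lemma abs_sub_le_of_mem_Nv {x y : ℤ × ℤ} (h : y ∈ Nv x) : |x.1 - y.1| ≤ 0 ∧ |x.2 - y.2| ≤ 1 := by
  simp only [Nv, Finset.mem_insert, Finset.mem_singleton] at h
  rcases h with rfl | rfl | rfl <;> simp

lemma exists_signal_of_four_le_applyL {c : ℤ × ℤ → ℤ} {L : Letter} {x : ℤ × ℤ}
    (h : 4 ≤ applyL c L x) :
    ∃ y, 4 ≤ c y ∧ |x.1 - y.1| ≤ ([L].count Letter.H : ℤ) ∧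
      |x.2 - y.2| ≤ ([L].count Letter.V : ℤ) := by
  cases L with
  | H =>
    obtain ⟨y, hy, hcy⟩ := exists_signal_mem_of_four_le_update (by simp [Nh]) h
    exact ⟨y, hcy, abs_sub_le_of_mem_Nh hy⟩
  | V =>
    obtain ⟨y, hy, hcy⟩ := exists_signal_mem_of_four_le_update (by simp [Nv]) h
    exact ⟨y, hcy, abs_sub_le_of_mem_Nv hy⟩

theorem stmt8_general (c : ℤ × ℤ → ℤ)
    (w : List Letter) (x : ℤ × ℤ) (hx : 4 ≤ runW c w x) :
    ∃ y : ℤ × ℤ, 4 ≤ c y ∧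
      |x.1 - y.1| ≤ (w.count Letter.H : ℤ) ∧
      |x.2 - y.2| ≤ (w.count Letter.V : ℤ) := by
  induction w generalizing c with
  | nil => exact ⟨x, hx, by simp, by simp⟩
  | cons L w ih =>
    obtain ⟨y, hy, hxy₁, hxy₂⟩ := ih (applyL c L) hx
    obtain ⟨z, hz, hyz₁, hyz₂⟩ := exists_signal_of_four_le_applyL hy
    refine ⟨z, hz, ?_, ?_⟩ <;> rw [List.count_cons, ← List.count_singleton, Nat.cast_add]
    · exact (abs_sub_le _ y.1 _).trans (add_le_add hxy₁ hyz₁)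
    · exact (abs_sub_le _ y.2 _).trans (add_le_add hxy₂ hyz₂)

/-- Signals propagate at speed at most one. -/
theorem stmt8 (c : ℤ × ℤ → ℤ) (hrange : ∀ x, 0 ≤ c x ∧ c x ≤ 5)
    (w : List Letter) (x : ℤ × ℤ) (hx : 4 ≤ runW c w x) :
    ∃ y : ℤ × ℤ, 4 ≤ c y ∧
      |x.1 - y.1| ≤ (w.count Letter.H : ℤ) ∧
      |x.2 - y.2| ≤ (w.count Letter.V : ℤ) :=
  stmt8_general c w x hx
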